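/- arXiv:1907.03024 — 3 statements merged into one kernel-verified Lean document; each statement's English description precedes it below -/
import Mathlib

section
/- Let X be a Hausdorff topological space, let f ∈ Homeo(X), and let x ∈ X with f(x) ≠ x. Then there exists an open neighborhood V of x such that for every γ ∈ Homeo(X) with γ ≠ id and Supp(γ) ⊆ V, the maps γ and f do not commute, i.e. γ ∘ f ≠ f ∘ γ. -/
/-!
Separate `x` from `f x` by disjoint open sets `U ∋ x` and `W ∋ f x`; then `V = U ∩ f⁻¹ W` is an
open neighbourhood of `x` that `f` moves off itself. If `γ` commutes with `f` and moves some `y`,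
that `y` lies in `V`, so `f y ∉ V` is fixed by `γ`; but `γ (f y) = f (γ y) ≠ f y`.
-/

open Set Topology

/-- The support of a homeomorphism: the closure of the set of non-fixed points. -/
def Supp {X : Type*} [TopologicalSpace X] (f : X ≃ₜ X) : Set X := closure {x | f x ≠ x}

theorem exists_isOpen_mem_disjoint_preimage_self {X : Type*} [TopologicalSpace X] [T2Space X]
    {f : X → X} (hf : Continuous f) {x : X} (hx : f x ≠ x) :
    ∃ V : Set X, IsOpen V ∧ x ∈ V ∧ Disjoint V (f ⁻¹' V) := by
  obtain ⟨U, W, hU, hW, hxU, hfxW, hUW⟩ := t2_separation hx.symm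
  refine ⟨U ∩ f ⁻¹' W, hU.inter (hW.preimage hf), ⟨hxU, hfxW⟩, ?_⟩
  exact disjoint_left.2 fun y hy hfy => disjoint_left.1 hUW hfy.1 hy.2

theorem Function.Commute.eq_self_of_nonfixed_subset {α : Type*} {γ f : α → α}
    (hcomm : Function.Commute γ f) (hf : f.Injective) {V : Set α}
    (hV : Disjoint V (f ⁻¹' V)) (hγ : {y | γ y ≠ y} ⊆ V) (y : α) : γ y = y := by
  by_contra hy
  have hfy_fixed : γ (f y) = f y := by
    by_contra hfy
    exact disjoint_left.1 hV (hγ hy) (hγ hfy)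
  exact hy (hf (hcomm y ▸ hfy_fixed))

theorem small_support_noncommuting
    {X : Type*} [TopologicalSpace X] [T2Space X]
    (f : X ≃ₜ X) (x : X) (hx : f x ≠ x) :
    ∃ V : Set X, IsOpen V ∧ x ∈ V ∧
      ∀ γ : X ≃ₜ X, γ ≠ Homeomorph.refl X → Supp γ ⊆ V →
        (γ : X → X) ∘ (f : X → X) ≠ (f : X → X) ∘ (γ : X → X) := by
  obtain ⟨V, hVopen, hxV, hVdisj⟩ := exists_isOpen_mem_disjoint_preimage_self f.continuous hx
  refine ⟨V, hVopen, hxV, fun γ hγ hsupp hcomm => hγ ?_⟩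
  ext y
  exact (Function.semiconj_iff_comp_eq.2 hcomm).commute.eq_self_of_nonfixed_subset f.injective
    hVdisj (subset_closure.trans hsupp) y
end

section
/- Let X be a Hausdorff topological space without isolated points, let f ∈ Homeo(X), and let x ∈ X with f(x) ≠ x. Then there exists an open neighborhood V of x such that for every γ ∈ Homeo(X) with γ(X ∖ V) ⊆ V, the maps f and γ ∘ f ∘ γ⁻¹ do not commute, i.e. f ∘ (γ ∘ f ∘ γ⁻¹) ≠ (γ ∘ f ∘ γ⁻¹) ∘ f. -/
/-!
Choose an open `U ∋ x` with `f U ∩ U = ∅` and a second point `y ∈ U`, and let `V = U \ {y}`.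
If `γ` throws `Vᶜ` into `V`, then so does the conjugate `g = γ f γ⁻¹`, because `f` throws `V` out
of `V`. Were `f` and `g` to commute, `f` would also throw `Vᶜ` into `V`: for `p ∉ V` we have
`g p ∈ V`, so `g (f p) = f (g p) ∉ V`, forcing `f p ∈ V`. Applied to `y` this gives
`f y ∈ V ⊆ U`, contradicting `f U ∩ U = ∅`.
-/

open Set Topology

theorem exists_isOpen_mapsTo_compl {X : Type*} [TopologicalSpace X] [T2Space X] {f : X → X}
    (hf : Continuous f) {x : X} (hx : f x ≠ x) :
    ∃ U : Set X, IsOpen U ∧ x ∈ U ∧ MapsTo f U Uᶜ := by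
  obtain ⟨u, v, hu, hv, hfxu, hxv, huv⟩ := t2_separation hx
  refine ⟨v ∩ f ⁻¹' u, hv.inter (hu.preimage hf), ⟨hxv, hfxu⟩, fun p hp hfp => ?_⟩
  exact huv.notMem_of_mem_left hp.2 hfp.1

section Conjugation

variable {α : Type*} {V : Set α}

theorem Equiv.mapsTo_symm_compl_of_image_compl_subset (γ : α ≃ α) (hγ : γ '' Vᶜ ⊆ V) :
    MapsTo γ.symm Vᶜ V := fun p hp => by
  by_contra h
  exact hp (γ.apply_symm_apply p ▸ hγ (mem_image_of_mem γ h))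

theorem Equiv.mapsTo_conj_compl (γ : α ≃ α) {f : α → α} (hf : MapsTo f V Vᶜ)
    (hγ : γ '' Vᶜ ⊆ V) : MapsTo (γ ∘ f ∘ γ.symm) Vᶜ V :=
  (mapsTo_iff_image_subset.2 hγ).comp (hf.comp (γ.mapsTo_symm_compl_of_image_compl_subset hγ))

theorem mapsTo_compl_of_comp_eq_comp {f g : α → α} (hfg : f ∘ g = g ∘ f)
    (hg : MapsTo g Vᶜ V) (hf : MapsTo f V Vᶜ) : MapsTo f Vᶜ V := fun p hp => by
  by_contra hfp
  have hfgp : f (g p) = g (f p) := congrFun hfg p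
  exact hf (hg hp) (hfgp ▸ hg hfp)

end Conjugation

theorem contraction_noncommuting
    {X : Type*} [TopologicalSpace X] [T2Space X]
    (hX : ∀ x : X, ¬ IsOpen ({x} : Set X))
    (f : X ≃ₜ X) (x : X) (hx : f x ≠ x) :
    ∃ V : Set X, IsOpen V ∧ x ∈ V ∧
      ∀ γ : X ≃ₜ X, γ '' Vᶜ ⊆ V →
        (f : X → X) ∘ ((γ : X → X) ∘ (f : X → X) ∘ (γ.symm : X → X)) ≠
          ((γ : X → X) ∘ (f : X → X) ∘ (γ.symm : X → X)) ∘ (f : X → X) := by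
  obtain ⟨U, hU, hxU, hfU⟩ := exists_isOpen_mapsTo_compl f.continuous hx
  obtain ⟨y, hyU, hyx⟩ : ∃ y ∈ U, y ≠ x := by
    by_contra! h
    exact hX x (eq_singleton_iff_unique_mem.2 ⟨hxU, h⟩ ▸ hU)
  refine ⟨U \ {y}, hU.sdiff isClosed_singleton, ⟨hxU, hyx.symm⟩, fun γ hγ hcomm => ?_⟩
  have hfV : MapsTo f (U \ {y}) (U \ {y})ᶜ :=
    (hfU.mono_left sdiff_subset).mono_right (compl_subset_compl.2 sdiff_subset)
  have hfy : f y ∈ U \ {y} :=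
    mapsTo_compl_of_comp_eq_comp hcomm (γ.toEquiv.mapsTo_conj_compl hfV hγ) hfV
      (fun h => h.2 rfl)
  exact hfU hyU hfy.1
end

section
/- Let X be a topological space, let f ∈ Homeo(X), and let x ∈ X with x ∉ Supp(f). Then there exists an open neighborhood V of x such that for every γ ∈ Homeo(X) with γ(X ∖ V) ⊆ V, the maps f and γ ∘ f ∘ γ⁻¹ commute, i.e. f ∘ (γ ∘ f ∘ γ⁻¹) = (γ ∘ f ∘ γ⁻¹) ∘ f. -/
/-!
Take `V` to be the complement of `Supp f`. A homeomorphism `γ` with `γ (X ∖ V) ⊆ V` moves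
`Supp f` off itself, so at every point either `f` or `γ ∘ f ∘ γ⁻¹` acts trivially: the two
permutations are disjoint, and disjoint permutations commute.
-/

open Set Topology

namespace Homeomorph

variable {X : Type*} [TopologicalSpace X]

theorem apply_eq_self_of_notMem_Supp (f : X ≃ₜ X) {y : X} (hy : y ∉ Supp f) : f y = y :=
  not_not.mp fun h => hy (subset_closure h)

theorem disjoint_conj_of_image_Supp_subset_compl {f γ : X ≃ₜ X}
    (hγ : γ '' Supp f ⊆ (Supp f)ᶜ) :
    Equiv.Perm.Disjoint f.toEquiv (γ.toEquiv * f.toEquiv * γ.toEquiv⁻¹) := by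
  intro y
  by_cases hy : y ∈ Supp f
  · have hγy : γ.symm y ∉ Supp f := fun h => hγ ⟨_, h, γ.apply_symm_apply y⟩ hy
    right
    change γ (f (γ.symm y)) = y
    rw [f.apply_eq_self_of_notMem_Supp hγy, γ.apply_symm_apply]
  · exact .inl (f.apply_eq_self_of_notMem_Supp hy)

end Homeomorph

theorem contraction_commuting
    {X : Type*} [TopologicalSpace X]
    (f : X ≃ₜ X) (x : X) (hx : x ∉ Supp f) :
    ∃ V : Set X, IsOpen V ∧ x ∈ V ∧
      ∀ γ : X ≃ₜ X, γ '' Vᶜ ⊆ V →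
        (f : X → X) ∘ ((γ : X → X) ∘ (f : X → X) ∘ (γ.symm : X → X)) =
          ((γ : X → X) ∘ (f : X → X) ∘ (γ.symm : X → X)) ∘ (f : X → X) := by
  refine ⟨(Supp f)ᶜ, isClosed_closure.isOpen_compl, hx, fun γ hγ => ?_⟩
  rw [compl_compl] at hγ
  exact congrArg DFunLike.coe (Homeomorph.disjoint_conj_of_image_Supp_subset_compl hγ).commute.eq
end
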